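/- Let d ≥ 2 be even, q an odd prime power, j ∈ F_q^*, and χ a nontrivial additive character of F_q. Let H_j = {x ∈ F_q^{d+1} : x_1² + ... + x_d² = j x_{d+1}²} and define (dσ_j)^∨(m) = |H_j|^{-1} Σ_{x ∈ H_j} χ(m·x). Then for every nonzero m ∈ F_q^{d+1}, |(dσ_j)^∨(m)| ≤ q^{-d/2}. -/

import Mathlib

/-!
Write `m = (m', m₀)`, `Q(x, y) = ∑ xᵢ² - j y²`, `η` for the quadratic character and `G` for its
Gauss sum. By orthogonality, `q · ∑_{x ∈ H_j} χ(m·x) = ∑_t ∑_x χ(t Q(x) + m·x)`. The term `t = 0`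
is `q^{d+1} [m = 0]`; for `t ≠ 0` the inner sum factors into `d + 1` one-variable quadratic Gauss
sums, which completing the square evaluates to `G^{d+1} η(t)^d η(-jt) χ(w/t)` with
`w = (m₀²/j - |m'|²)/4`, and `η(t)^d = 1` because `d` is even. The remaining sum over `t` is again
a Gauss sum, `η(-jw) G`. Hence `q · ∑_{x ∈ H_j} χ(m·x) = q^{d+1} [m = 0] + G^{d+2} η(j|m'|² - m₀²)`,
and `|G|² = q` gives both `|H_j| = q^d` (take `m = 0`) and `|∑_{x ∈ H_j} χ(m·x)| ≤ q^{d/2}` for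
`m ≠ 0`.
-/

open Finset

namespace AddChar

variable {A M : Type*} [AddCommMonoid A]

theorem map_sum_eq_prod [CommMonoid M] (ψ : AddChar A M) {ι : Type*} (s : Finset ι)
    (f : ι → A) : ψ (∑ i ∈ s, f i) = ∏ i ∈ s, ψ (f i) := by
  classical
  induction s using Finset.induction with
  | empty => simp
  | insert i s hi ih => rw [sum_insert hi, prod_insert hi, map_add_eq_mul, ih]

variable [CommSemiring M] (ψ : AddChar A M)

theorem sum_prod_apply_add {V W : Type*} [Fintype V] [Fintype W] (f : V → A) (g : W → A) :
    ∑ x : V × W, ψ (f x.1 + g x.2) = (∑ v, ψ (f v)) * ∑ w, ψ (g w) := by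
  simp only [map_add_eq_mul, Fintype.sum_prod_type, sum_mul_sum]

theorem sum_pi_apply_sum {ι V : Type*} [Fintype ι] [DecidableEq ι] [Fintype V]
    (f : ι → V → A) : ∑ x : ι → V, ψ (∑ i, f i (x i)) = ∏ i, ∑ v, ψ (f i v) := by
  simp only [map_sum_eq_prod, Fintype.prod_sum]

end AddChar

theorem four_ne_zero_of_ringChar_ne_two {F : Type*} [Field F] (hF : ringChar F ≠ 2) :
    (4 : F) ≠ 0 := by
  rw [show (4 : F) = 2 * 2 by norm_num]
  exact mul_ne_zero (Ring.two_ne_zero hF) (Ring.two_ne_zero hF)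

variable {F : Type*} [Field F] [Fintype F] [DecidableEq F]

variable (F) in
noncomputable def quadraticCharComplex : MulChar F ℂ :=
  (quadraticChar F).ringHomComp (Int.castRingHom ℂ)

local notation "η" => quadraticCharComplex _

theorem quadraticCharComplex_apply (a : F) : η a = (quadraticChar F a : ℂ) := rfl

variable (F) in
theorem quadraticCharComplex_isQuadratic : (quadraticCharComplex F).IsQuadratic :=
  (quadraticChar_isQuadratic F).comp _

theorem quadraticCharComplex_inv (a : F) : η a⁻¹ = η a := by
  rw [← MulChar.inv_apply', (quadraticCharComplex_isQuadratic F).inv]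

theorem norm_quadraticCharComplex_le (a : F) : ‖η a‖ ≤ 1 := by
  rcases quadraticChar_isQuadratic F a with h | h | h <;> simp [quadraticCharComplex_apply, h]

theorem quadraticCharComplex_pow_of_even {n : ℕ} (hn : Even n) {a : F} (ha : a ≠ 0) :
    η a ^ n = 1 := by
  obtain ⟨k, rfl⟩ := hn
  rw [← map_pow, ← two_mul, pow_mul', quadraticCharComplex_apply,
    quadraticChar_sq_one' (pow_ne_zero k ha), Int.cast_one]

theorem quadraticCharComplex_ne_one (hF : ringChar F ≠ 2) : quadraticCharComplex F ≠ 1 :=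
  (MulChar.ringHomComp_ne_one_iff (RingHom.injective_int _)).mpr (quadraticChar_ne_one hF)

theorem sum_quadraticCharComplex (hF : ringChar F ≠ 2) : ∑ a : F, η a = 0 := by
  simp only [quadraticCharComplex_apply, ← Int.cast_sum, quadraticChar_sum_zero hF, Int.cast_zero]

variable {χ : AddChar F ℂ}

theorem sum_quadraticCharComplex_mul_addChar_mul (hF : ringChar F ≠ 2) (w : F) :
    ∑ t, η t * χ (w * t) = η w * gaussSum η χ := by
  rcases eq_or_ne w 0 with rfl | hw
  · simp [sum_quadraticCharComplex hF, MulChar.map_zero]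
  · have h := gaussSum_mulShift_eq (quadraticCharComplex F) χ (Units.mk0 w hw)
    rwa [(quadraticCharComplex_isQuadratic F).inv, Units.val_mk0] at h

theorem sum_quadraticCharComplex_mul_addChar_div (hF : ringChar F ≠ 2) (c w : F) :
    ∑ t, η (c * t) * χ (w / t) = η (c * w) * gaussSum η χ := by
  calc ∑ t, η (c * t) * χ (w / t) = ∑ t, η (c * t⁻¹) * χ (w / t⁻¹) :=
        (Fintype.sum_equiv (Equiv.inv F) _ _ fun _ => rfl).symm
    _ = η c * ∑ t, η t * χ (w * t) := by
        simp only [mul_sum, map_mul, quadraticCharComplex_inv, div_inv_eq_mul, mul_assoc]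
    _ = η (c * w) * gaussSum η χ := by
        rw [sum_quadraticCharComplex_mul_addChar_mul hF, ← mul_assoc, ← map_mul]

theorem sum_addChar_mul_sq (hF : ringChar F ≠ 2) (hχ : χ.IsPrimitive) {a : F} (ha : a ≠ 0) :
    ∑ x, χ (a * x ^ 2) = η a * gaussSum η χ := by
  have hcard (y : F) : (Fintype.card {x : F // x ^ 2 = y} : ℂ) = η y + 1 := by
    have h := quadraticChar_card_sqrts hF y
    rw [Set.toFinset_ofPred, ← Fintype.card_subtype] at h
    rw [quadraticCharComplex_apply, ← Int.cast_natCast, h]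
    push_cast; rfl
  calc ∑ x, χ (a * x ^ 2) = ∑ y, (η y + 1) * χ (a * y) := by
        rw [← Fintype.sum_fiberwise' (fun x : F => x ^ 2) (fun y => χ (a * y))]
        simp only [sum_const, card_univ, nsmul_eq_mul, hcard]
    _ = ∑ y, η y * χ (a * y) + ∑ y, χ (y * a) := by
        simp only [add_mul, one_mul, sum_add_distrib, mul_comm a]
    _ = η a * gaussSum η χ := by
        rw [sum_quadraticCharComplex_mul_addChar_mul hF, AddChar.sum_mulShift a hχ, if_neg ha,
          Nat.cast_zero, add_zero]

theorem sum_addChar_quadratic (hF : ringChar F ≠ 2) (hχ : χ.IsPrimitive) {a : F} (ha : a ≠ 0)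
    (b : F) :
    ∑ x, χ (a * x ^ 2 + b * x) = χ (-b ^ 2 / (4 * a)) * (η a * gaussSum η χ) := by
  have h2 : (2 : F) ≠ 0 := Ring.two_ne_zero hF
  have h4 : (4 : F) ≠ 0 := four_ne_zero_of_ringChar_ne_two hF
  have hsq (y : F) : a * (y - b / (2 * a)) ^ 2 + b * (y - b / (2 * a)) =
      -b ^ 2 / (4 * a) + a * y ^ 2 := by
    field_simp
    ring
  rw [← sum_addChar_mul_sq hF hχ ha, mul_sum,
    ← (Equiv.subRight (b / (2 * a))).sum_comp]
  simp only [Equiv.subRight_apply, hsq, AddChar.map_add_eq_mul]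

theorem norm_gaussSum_sq (hF : ringChar F ≠ 2) (hχ : χ.IsPrimitive) :
    ‖gaussSum η χ‖ ^ 2 = Fintype.card F := by
  have hneg : ‖η (-1 : F)‖ = 1 := by
    rcases quadraticChar_dichotomy (neg_ne_zero.mpr (one_ne_zero (α := F))) with h | h <;>
      rw [quadraticCharComplex_apply, h] <;> simp
  rw [← norm_pow, gaussSum_sq (quadraticCharComplex_ne_one hF)
    (quadraticCharComplex_isQuadratic F) hχ, norm_mul, hneg, one_mul, Complex.norm_natCast]

theorem card_mul_sum_filter_eq_zero (hχ : χ.IsPrimitive) {V : Type*} [Fintype V] (f : V → F)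
    (g : V → ℂ) :
    (Fintype.card F : ℂ) * ∑ x ∈ univ.filter (fun x => f x = 0), g x =
      ∑ t, ∑ x, χ (t * f x) * g x := by
  rw [sum_comm, mul_sum, sum_filter]
  refine sum_congr rfl fun x _ => ?_
  rw [← sum_mul, AddChar.sum_mulShift (f x) hχ]
  split_ifs <;> simp

variable (F) in
def quadricCone (d : ℕ) (j : F) : Finset ((Fin d → F) × F) :=
  univ.filter fun x => ∑ i, x.1 i ^ 2 = j * x.2 ^ 2

variable {d : ℕ}

theorem sum_addChar_dotProduct (hχ : χ.IsPrimitive) (m : (Fin d → F) × F) :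
    ∑ x : (Fin d → F) × F, χ (∑ i, m.1 i * x.1 i + m.2 * x.2) =
      if m = 0 then (Fintype.card F : ℂ) ^ (d + 1) else 0 := by
  rw [AddChar.sum_prod_apply_add χ (fun v : Fin d → F => ∑ i, m.1 i * v i) (m.2 * ·),
    AddChar.sum_pi_apply_sum χ (fun i a => m.1 i * a)]
  simp only [mul_comm (m.1 _), mul_comm m.2, AddChar.sum_mulShift _ hχ,
    Nat.cast_ite, Nat.cast_zero, Fintype.prod_ite_zero, prod_const, card_univ, Fintype.card_fin]
  split_ifs <;> simp_all [Prod.ext_iff, funext_iff, pow_succ]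

theorem sum_addChar_mul_coneForm_add_dot (hF : ringChar F ≠ 2) (hχ : χ.IsPrimitive)
    (hd : Even d) {j : F} (hj : j ≠ 0) {t : F} (ht : t ≠ 0) (m : (Fin d → F) × F) :
    ∑ x : (Fin d → F) × F,
        χ (t * (∑ i, x.1 i ^ 2 - j * x.2 ^ 2) + (∑ i, m.1 i * x.1 i + m.2 * x.2)) =
      gaussSum η χ ^ (d + 1) * η (-j * t) * χ ((m.2 ^ 2 / j - ∑ i, m.1 i ^ 2) / 4 / t) := by
  have hjt : -j * t ≠ 0 := mul_ne_zero (neg_ne_zero.mpr hj) ht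
  have hsplit (x : (Fin d → F) × F) :
      t * (∑ i, x.1 i ^ 2 - j * x.2 ^ 2) + (∑ i, m.1 i * x.1 i + m.2 * x.2) =
        ∑ i, (t * x.1 i ^ 2 + m.1 i * x.1 i) + (-j * t * x.2 ^ 2 + m.2 * x.2) := by
    rw [sum_add_distrib, ← mul_sum]
    ring
  have harg : ∑ i, -m.1 i ^ 2 / (4 * t) + -m.2 ^ 2 / (4 * (-j * t)) =
      (m.2 ^ 2 / j - ∑ i, m.1 i ^ 2) / 4 / t := by
    rw [← sum_div, sum_neg_distrib]
    field_simp
    ring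
  simp only [hsplit]
  rw [AddChar.sum_prod_apply_add χ (fun v : Fin d → F => ∑ i, (t * v i ^ 2 + m.1 i * v i))
      (fun y => -j * t * y ^ 2 + m.2 * y),
    AddChar.sum_pi_apply_sum χ (fun i a => t * a ^ 2 + m.1 i * a)]
  simp only [sum_addChar_quadratic hF hχ ht, sum_addChar_quadratic hF hχ hjt]
  rw [prod_mul_distrib, prod_mul_distrib, prod_const, prod_const, card_univ, Fintype.card_fin,
    quadraticCharComplex_pow_of_even hd ht, ← AddChar.map_sum_eq_prod, ← harg,
    AddChar.map_add_eq_mul]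
  ring

theorem card_mul_sum_quadricCone (hF : ringChar F ≠ 2) (hχ : χ.IsPrimitive) (hd : Even d)
    {j : F} (hj : j ≠ 0) (m : (Fin d → F) × F) :
    (Fintype.card F : ℂ) * ∑ x ∈ quadricCone F d j, χ (∑ i, m.1 i * x.1 i + m.2 * x.2) =
      (if m = 0 then (Fintype.card F : ℂ) ^ (d + 1) else 0) +
        gaussSum η χ ^ (d + 2) * η (j * ∑ i, m.1 i ^ 2 - m.2 ^ 2) := by
  set Q : (Fin d → F) × F → F := fun x => ∑ i, x.1 i ^ 2 - j * x.2 ^ 2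
  set L : (Fin d → F) × F → F := fun x => ∑ i, m.1 i * x.1 i + m.2 * x.2
  set w := (m.2 ^ 2 / j - ∑ i, m.1 i ^ 2) / 4
  have hcone : quadricCone F d j = univ.filter fun x => Q x = 0 := by
    simp only [quadricCone, Q, sub_eq_zero]
  have hw : η (-j * w) = η (j * ∑ i, m.1 i ^ 2 - m.2 ^ 2) := by
    have h2 : (2 : F) ≠ 0 := Ring.two_ne_zero hF
    have h4 : (4 : F) ≠ 0 := four_ne_zero_of_ringChar_ne_two hF
    rw [show -j * w = (j * ∑ i, m.1 i ^ 2 - m.2 ^ 2) * (2⁻¹) ^ 2 by simp only [w]; field_simp; ring,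
      map_mul, quadraticCharComplex_apply (2⁻¹ ^ 2), quadraticChar_sq_one' (inv_ne_zero h2),
      Int.cast_one, mul_one]
  calc (Fintype.card F : ℂ) * ∑ x ∈ quadricCone F d j, χ (L x)
      = ∑ t, ∑ x, χ (t * Q x + L x) := by
        simp only [hcone, card_mul_sum_filter_eq_zero hχ, AddChar.map_add_eq_mul]
    _ = ∑ x, χ (L x) + ∑ t ∈ univ.erase 0, ∑ x, χ (t * Q x + L x) := by
        rw [← add_sum_erase univ (fun t => ∑ x, χ (t * Q x + L x)) (mem_univ 0)]
        simp only [zero_mul, zero_add]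
    _ = (if m = 0 then (Fintype.card F : ℂ) ^ (d + 1) else 0) +
          gaussSum η χ ^ (d + 1) * ∑ t, η (-j * t) * χ (w / t) := by
        rw [sum_addChar_dotProduct hχ, mul_sum,
          ← sum_erase univ (a := 0) (by simp [MulChar.map_zero])]
        congr 1
        refine sum_congr rfl fun t ht => ?_
        rw [sum_addChar_mul_coneForm_add_dot hF hχ hd hj (ne_of_mem_erase ht), mul_assoc]
    _ = _ := by
        rw [sum_quadraticCharComplex_mul_addChar_div hF, hw]
        ring

theorem card_quadricCone (hF : ringChar F ≠ 2) (hd : Even d) {j : F} (hj : j ≠ 0) :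
    #(quadricCone F d j) = Fintype.card F ^ d := by
  have h := card_mul_sum_quadricCone hF
    (AddChar.FiniteField.primitiveChar_to_Complex_isPrimitive F) hd hj 0
  simp only [Prod.fst_zero, Prod.snd_zero, Pi.zero_apply, zero_mul, sum_const_zero, add_zero,
    AddChar.map_zero_eq_one, sum_const, nsmul_eq_mul, mul_one, if_true, mul_zero, ne_eq,
    OfNat.ofNat_ne_zero, not_false_eq_true, zero_pow, sub_zero, MulChar.map_zero] at h
  have hq : (Fintype.card F : ℂ) ≠ 0 := Nat.cast_ne_zero.mpr Fintype.card_ne_zero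
  exact_mod_cast mul_left_cancel₀ hq (h.trans (pow_succ' _ _))

theorem norm_sum_quadricCone_sq_le (hF : ringChar F ≠ 2) (hχ : χ.IsPrimitive) (hd : Even d)
    {j : F} (hj : j ≠ 0) {m : (Fin d → F) × F} (hm : m ≠ 0) :
    ‖∑ x ∈ quadricCone F d j, χ (∑ i, m.1 i * x.1 i + m.2 * x.2)‖ ^ 2 ≤ Fintype.card F ^ d := by
  have hq : (0 : ℝ) < Fintype.card F := Nat.cast_pos.mpr Fintype.card_pos
  have h := congrArg (‖·‖ ^ 2) (card_mul_sum_quadricCone hF hχ hd hj m)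
  rw [if_neg hm, zero_add, norm_mul, norm_mul, mul_pow, mul_pow, norm_pow, ← pow_mul,
    mul_comm (d + 2) 2, pow_mul, norm_gaussSum_sq hF hχ, Complex.norm_natCast] at h
  refine le_of_mul_le_mul_left ?_ (pow_pos hq 2)
  calc (Fintype.card F : ℝ) ^ 2 * _ = _ := h
    _ ≤ (Fintype.card F : ℝ) ^ (d + 2) * 1 := by
        gcongr
        exact pow_le_one₀ (norm_nonneg _) (norm_quadraticCharComplex_le (F := F) _)
    _ = (Fintype.card F : ℝ) ^ 2 * (Fintype.card F : ℝ) ^ d := by ring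

theorem fourier_decay_H_general
    (F : Type) [Field F] [Fintype F] [DecidableEq F]
    (hchar : ringChar F ≠ 2)
    (d : ℕ) (hdeven : Even d) (j : F) (hj : j ≠ 0)
    (χ : AddChar F ℂ) (hχ : χ ≠ 1)
    (m : (Fin d → F) × F) (hm : m ≠ 0) :
    norm
      ((((univ.filter (fun x : (Fin d → F) × F =>
            ∑ i, (x.1 i) ^ 2 = j * x.2 ^ 2)).card : ℂ))⁻¹ *
        ∑ x ∈ univ.filter (fun x : (Fin d → F) × F =>
            ∑ i, (x.1 i) ^ 2 = j * x.2 ^ 2),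
          χ (∑ i, m.1 i * x.1 i + m.2 * x.2)) ≤
      (Fintype.card F : ℝ) ^ (-(d : ℝ) / 2) := by
  set q : ℝ := (Fintype.card F : ℝ)
  have hq : 0 < q := Nat.cast_pos.mpr Fintype.card_pos
  have hS := norm_sum_quadricCone_sq_le hchar (AddChar.IsPrimitive.of_ne_one hχ) hdeven hj hm
  have hsqrt : (q ^ ((d : ℝ) / 2)) ^ 2 = q ^ d := by
    rw [← Real.rpow_natCast, ← Real.rpow_mul hq.le, ← Real.rpow_natCast q d]
    norm_num
  change ‖((#(quadricCone F d j) : ℕ) : ℂ)⁻¹ * ∑ x ∈ quadricCone F d j, _‖ ≤ _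
  rw [card_quadricCone hchar hdeven hj, norm_mul, norm_inv, Nat.cast_pow, norm_pow,
    Complex.norm_natCast, show -(d : ℝ) / 2 = d / 2 - d by ring, Real.rpow_sub hq,
    Real.rpow_natCast, inv_mul_eq_div]
  gcongr
  rw [← pow_le_pow_iff_left₀ (norm_nonneg _) (by positivity) two_ne_zero, hsqrt]
  exact hS

theorem fourier_decay_H
    (F : Type) [Field F] [Fintype F] [DecidableEq F]
    (hchar : ringChar F ≠ 2)
    (d : ℕ) (hd2 : 2 ≤ d) (hdeven : Even d) (j : F) (hj : j ≠ 0)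
    (χ : AddChar F ℂ) (hχ : χ ≠ 1)
    (m : (Fin d → F) × F) (hm : m ≠ 0) :
    norm
      ((((univ.filter (fun x : (Fin d → F) × F =>
            ∑ i, (x.1 i) ^ 2 = j * x.2 ^ 2)).card : ℂ))⁻¹ *
        ∑ x ∈ univ.filter (fun x : (Fin d → F) × F =>
            ∑ i, (x.1 i) ^ 2 = j * x.2 ^ 2),
          χ (∑ i, m.1 i * x.1 i + m.2 * x.2)) ≤
      (Fintype.card F : ℝ) ^ (-(d : ℝ) / 2) :=
  fourier_decay_H_general F hchar d hdeven j hj χ hχ m hm
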